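/- Let $f:[0,\infty)\to[0,\infty)$ be monotone decreasing with $f(0)=1$ and $\int_0^\infty t^{d-1}f(t)^2\,dt<\infty$, and let $X\subset\mathbb{R}^n$ be separated ($d_*(X)>0$) with linear span of dimension $d$. Then $\sup_{j}\sum_{k=1}^\infty f(|x_k-x_j|)^2 \le 1 + d^2\left(\frac{5}{d_*(X)}\right)^d \int_0^\infty s^{d-1}f(s)^2\,ds < \infty$. -/

import Mathlib

/-!
Put `δ = d_*(X)` and sort the points `x_k ≠ x_j` into shells `m δ ≤ |x_k - x_j| < (m + 1) δ`,
`m ≥ 1`. Inside the `d`-dimensional span of `X` the balls of radius `δ / 2` around the points of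
one shell are disjoint and lie in an annulus, so comparing Haar measures the shell holds at most
`(2m + 3)^d - (2m - 1)^d ≤ d 5^d (m^d - (m - 1)^d)` points. Each of them contributes at most
`f(m δ)²`, and since `f` decreases,
`(m^d - (m - 1)^d) δ^d f(m δ)² ≤ d ∫_{(m-1)δ}^{mδ} s^{d-1} f(s)² ds`.
Summing over the shells gives the integral term; `x_j` itself contributes `f(0)² = 1`.
-/

open Set MeasureTheory ENNReal
open Finset Metric Module

theorem two_mul_add_three_pow_sub_le {m : ℝ} (hm : 1 ≤ m) (d : ℕ) :
    (2 * m + 3) ^ d - (2 * m - 1) ^ d ≤ d * 5 ^ d * (m ^ d - (m - 1) ^ d) := by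
  cases d with
  | zero => simp
  | succ k =>
    have hupper : (2 * m + 3) ^ (k + 1) - (2 * m - 1) ^ (k + 1) ≤ 4 * (k + 1) * (5 * m) ^ k := by
      have h := abs_pow_sub_pow_le (2 * m + 3) (2 * m - 1) (k + 1)
      rw [show 2 * m + 3 - (2 * m - 1) = 4 by ring, abs_of_pos (four_pos : (0 : ℝ) < 4),
        max_eq_left (by rw [abs_of_pos (by linarith), abs_of_pos (by linarith)]; linarith),
        abs_of_pos (by linarith : (0 : ℝ) < 2 * m + 3), Nat.add_sub_cancel] at h
      push_cast at h
      refine (le_abs_self _).trans (h.trans ?_)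
      gcongr
      linarith
    have hlower : m ^ k ≤ m ^ (k + 1) - (m - 1) ^ (k + 1) := by
      have : (m - 1) ^ k ≤ m ^ k := pow_le_pow_left₀ (by linarith) (by linarith) k
      rw [pow_succ, pow_succ]
      nlinarith
    calc _ ≤ 4 * (k + 1) * (5 * m) ^ k := hupper
      _ ≤ (k + 1) * 5 ^ (k + 1) * m ^ k := by
        rw [mul_pow, pow_succ]
        have : 0 ≤ (k + 1) * 5 ^ k * m ^ k := by positivity
        nlinarith
      _ ≤ _ := by
        push_cast
        gcongr

theorem natCast_mul_integral_pow_pred (d : ℕ) (a b : ℝ) :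
    d * ∫ x in a..b, x ^ (d - 1) = b ^ d - a ^ d := by
  cases d with
  | zero => simp
  | succ k =>
    rw [integral_pow]
    push_cast
    field_simp

theorem pow_sub_pow_mul_le_integral {g : ℝ → ℝ} {a b : ℝ} (d : ℕ) (ha : 0 ≤ a) (hab : a ≤ b)
    (hg : AntitoneOn g (Icc a b))
    (hint : IntervalIntegrable (fun s => s ^ (d - 1) * g s) volume a b) :
    (b ^ d - a ^ d) * g b ≤ d * ∫ s in a..b, s ^ (d - 1) * g s := by
  rw [← natCast_mul_integral_pow_pred, mul_assoc, ← intervalIntegral.integral_mul_const]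
  gcongr
  refine intervalIntegral.integral_mono_on hab (by simp) hint fun s hs => ?_
  exact mul_le_mul_of_nonneg_left (hg hs ⟨hab, le_rfl⟩ hs.2) (pow_nonneg (ha.trans hs.1) _)

theorem sum_integral_le_integral_Ioi {h : ℝ → ℝ} (hh : ∀ s, 0 < s → 0 ≤ h s)
    (hint : IntegrableOn h (Ioi 0)) {δ : ℝ} (hδ : 0 < δ) (T : Finset ℕ) (hT : ∀ m ∈ T, 1 ≤ m) :
    ∑ m ∈ T, ∫ s in (m * δ - δ)..(m * δ), h s ≤ ∫ s in Ioi 0, h s := by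
  have hsub : ∀ m ∈ T, Ioc ((m : ℝ) * δ - δ) (m * δ) ⊆ Ioi 0 := fun m hm s hs => by
    have : (1 : ℝ) ≤ m := by exact_mod_cast hT m hm
    exact lt_of_le_of_lt (by nlinarith) hs.1
  have hmono : Monotone fun m : ℕ => (m : ℝ) * δ - δ := fun m k hmk =>
    sub_le_sub_right (mul_le_mul_of_nonneg_right (by exact_mod_cast hmk) hδ.le) δ
  have hdisj : Pairwise (Function.onFun Disjoint fun m : ℕ => Ioc ((m : ℝ) * δ - δ) (m * δ)) := by
    convert hmono.pairwise_disjoint_on_Ioc_succ using 3 with m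
    simp only [Order.succ_eq_add_one, Nat.cast_add, Nat.cast_one]
    ring_nf
  calc ∑ m ∈ T, ∫ s in (m * δ - δ)..(m * δ), h s
      = ∑ m ∈ T, ∫ s in Ioc ((m : ℝ) * δ - δ) (m * δ), h s :=
        sum_congr rfl fun m _ => intervalIntegral.integral_of_le (by linarith)
    _ = ∫ s in ⋃ m ∈ T, Ioc ((m : ℝ) * δ - δ) (m * δ), h s :=
        (integral_biUnion_finset T (fun _ _ => measurableSet_Ioc) (hdisj.set_pairwise _)
          fun m hm => hint.mono_set (hsub m hm)).symm
    _ ≤ ∫ s in Ioi 0, h s :=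
        setIntegral_mono_set hint ((ae_restrict_mem measurableSet_Ioi).mono hh)
          (Set.iUnion₂_subset hsub).eventuallyLE

section Separated

variable {E : Type*} [NormedAddCommGroup E] [NormedSpace ℝ E] [FiniteDimensional ℝ E]

theorem card_mul_pow_le_of_separated_of_mem_annulus {ι : Type*} (Y : ι → E) (s : Finset ι)
    (c : E) {ρ a b : ℝ} (hρ : 0 < ρ) (hρa : ρ ≤ a) (hab : a ≤ b)
    (hsep : ∀ i ∈ s, ∀ k ∈ s, i ≠ k → 2 * ρ ≤ dist (Y i) (Y k))
    (hs : ∀ i ∈ s, a ≤ dist (Y i) c ∧ dist (Y i) c ≤ b) :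
    #s * ρ ^ finrank ℝ E ≤ (b + ρ) ^ finrank ℝ E - (a - ρ) ^ finrank ℝ E := by
  let _ : MeasurableSpace E := borel E
  have _ : BorelSpace E := ⟨rfl⟩
  set μ : Measure E := Measure.addHaar
  set U := ⋃ i ∈ s, ball (Y i) ρ
  have hU : μ U = #s * ENNReal.ofReal (ρ ^ finrank ℝ E) * μ (ball 0 1) := by
    rw [measure_biUnion_finset (fun i hi k hk hik => ball_disjoint_ball
      (by linarith [hsep i hi k hk hik])) fun _ _ => measurableSet_ball]
    simp [Measure.addHaar_ball_of_pos μ _ hρ, mul_assoc]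
  have hdisj : Disjoint U (closedBall c (a - ρ)) := by
    refine Set.disjoint_iUnion₂_left.2 fun i hi => (closedBall_disjoint_ball ?_).symm
    rw [dist_comm]
    linarith [(hs i hi).1]
  have hsub : U ∪ closedBall c (a - ρ) ⊆ ball c (b + ρ) := by
    refine Set.union_subset (Set.iUnion₂_subset fun i hi => ball_subset_ball' ?_)
      (closedBall_subset_ball (by linarith))
    linarith [(hs i hi).2]
  have key := (measure_union (μ := μ) hdisj measurableSet_closedBall).symm.trans_le
    (measure_mono hsub)
  rw [hU, Measure.addHaar_closedBall μ _ (by linarith),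
    Measure.addHaar_ball_of_pos μ c (by linarith), ← add_mul,
    ENNReal.mul_le_mul_iff_left (measure_ball_pos μ 0 one_pos).ne'
    measure_ball_lt_top.ne, ← ENNReal.ofReal_natCast, ← ENNReal.ofReal_mul (by positivity),
    ← ENNReal.ofReal_add (by positivity) (pow_nonneg (by linarith) _),
    ENNReal.ofReal_le_ofReal_iff (pow_nonneg (by linarith) _)] at key
  linarith

theorem card_le_of_separated_of_mem_shell {ι : Type*} (Y : ι → E) (s : Finset ι) (c : E)
    {δ : ℝ} (hδ : 0 < δ) {m : ℕ} (hm : 1 ≤ m)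
    (hsep : ∀ i ∈ s, ∀ k ∈ s, i ≠ k → δ ≤ dist (Y i) (Y k))
    (hs : ∀ i ∈ s, m * δ ≤ dist (Y i) c ∧ dist (Y i) c ≤ (m + 1) * δ) :
    (#s : ℝ) ≤
      finrank ℝ E * 5 ^ finrank ℝ E * ((m : ℝ) ^ finrank ℝ E - (m - 1) ^ finrank ℝ E) := by
  have hm' : (1 : ℝ) ≤ m := by exact_mod_cast hm
  have h := card_mul_pow_le_of_separated_of_mem_annulus Y s c (half_pos hδ)
    (by nlinarith) (by nlinarith) (by simpa only [mul_div_cancel₀ δ two_ne_zero] using hsep) hs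
  rw [show (m + 1) * δ + δ / 2 = δ / 2 * (2 * m + 3) by ring,
    show m * δ - δ / 2 = δ / 2 * (2 * m - 1) by ring, mul_pow, mul_pow, ← mul_sub,
    mul_comm, mul_le_mul_iff_right₀ (by positivity)] at h
  exact h.trans (two_mul_add_three_pow_sub_le hm' _)

theorem sum_le_integral_of_separated {ι : Type*} (Y : ι → E) (F : Finset ι) (c : E) {δ : ℝ}
    (hδ : 0 < δ) (hsep : ∀ i ∈ F, ∀ k ∈ F, i ≠ k → δ ≤ dist (Y i) (Y k))
    (hfar : ∀ i ∈ F, δ ≤ dist (Y i) c)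
    {g : ℝ → ℝ} (hg0 : ∀ t, 0 ≤ t → 0 ≤ g t) (hg : AntitoneOn g (Ici 0))
    (hint : IntegrableOn (fun s => s ^ (finrank ℝ E - 1) * g s) (Ioi 0)) :
    ∑ i ∈ F, g (dist (Y i) c) ≤
      finrank ℝ E ^ 2 * (5 / δ) ^ finrank ℝ E * ∫ s in Ioi 0, s ^ (finrank ℝ E - 1) * g s := by
  set d := finrank ℝ E
  set shell : ι → ℕ := fun i => ⌊dist (Y i) c / δ⌋₊
  have hshell : ∀ i, shell i * δ ≤ dist (Y i) c ∧ dist (Y i) c < (shell i + 1) * δ := fun i =>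
    ⟨(le_div_iff₀ hδ).1 (Nat.floor_le (by positivity)),
      (div_lt_iff₀ hδ).1 (Nat.lt_floor_add_one _)⟩
  have hshell_pos : ∀ i ∈ F, 1 ≤ shell i := fun i hi =>
    (Nat.le_floor_iff (by positivity)).2 (by simpa [le_div_iff₀ hδ] using hfar i hi)
  have hfiber : ∀ m ∈ F.image shell, ∑ i ∈ F with shell i = m, g (dist (Y i) c) ≤
      d * (5 / δ) ^ d * (d * ∫ s in (m * δ - δ)..(m * δ), s ^ (d - 1) * g s) := by
    intro m hm
    have hm1 : 1 ≤ m := by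
      obtain ⟨i, hi, rfl⟩ := mem_image.1 hm
      exact hshell_pos i hi
    have hm1' : (1 : ℝ) ≤ m := by exact_mod_cast hm1
    set A := F.filter fun i => shell i = m
    have hcard := card_le_of_separated_of_mem_shell Y A c hδ hm1
      (fun i hi k hk => hsep i (mem_filter.1 hi).1 k (mem_filter.1 hk).1) fun i hi => by
        obtain ⟨h₁, h₂⟩ := hshell i
        rw [(mem_filter.1 hi).2] at h₁ h₂
        exact ⟨h₁, h₂.le⟩
    have hIoc : IntervalIntegrable (fun s => s ^ (d - 1) * g s) volume (m * δ - δ) (m * δ) :=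
      (intervalIntegrable_iff_integrableOn_Ioc_of_le (by linarith)).2
        (hint.mono_set fun s hs => lt_of_le_of_lt (by nlinarith) hs.1)
    calc ∑ i ∈ A, g (dist (Y i) c) ≤ #A * g (m * δ) := by
          rw [← nsmul_eq_mul]
          refine sum_le_card_nsmul _ _ _ fun i hi =>
            hg (mem_Ici.2 (by positivity)) (mem_Ici.2 dist_nonneg) ?_
          simpa [(mem_filter.1 hi).2] using (hshell i).1
      _ ≤ d * 5 ^ d * ((m : ℝ) ^ d - (m - 1) ^ d) * g (m * δ) :=
          mul_le_mul_of_nonneg_right hcard (hg0 _ (by positivity))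
      _ = d * (5 / δ) ^ d * (((m * δ) ^ d - (m * δ - δ) ^ d) * g (m * δ)) := by
          rw [show (m : ℝ) * δ - δ = (m - 1) * δ by ring, mul_pow, mul_pow, div_pow]
          field_simp
      _ ≤ _ := mul_le_mul_of_nonneg_left (pow_sub_pow_mul_le_integral d (by nlinarith)
          (by linarith) (hg.mono fun t ht => le_trans (by nlinarith) ht.1) hIoc) (by positivity)
  calc ∑ i ∈ F, g (dist (Y i) c)
      = ∑ m ∈ F.image shell, ∑ i ∈ F with shell i = m, g (dist (Y i) c) :=
        (sum_fiberwise_of_maps_to (fun i hi => mem_image_of_mem shell hi) _).symm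
    _ ≤ ∑ m ∈ F.image shell,
          d * (5 / δ) ^ d * (d * ∫ s in (m * δ - δ)..(m * δ), s ^ (d - 1) * g s) :=
        sum_le_sum hfiber
    _ = d ^ 2 * (5 / δ) ^ d *
          ∑ m ∈ F.image shell, ∫ s in (m * δ - δ)..(m * δ), s ^ (d - 1) * g s := by
        rw [mul_sum]
        exact sum_congr rfl fun _ _ => by ring
    _ ≤ _ := by
        gcongr
        refine sum_integral_le_integral_Ioi (fun s hs => ?_) hint hδ _ ?_
        · exact mul_nonneg (pow_nonneg hs.le _) (hg0 s hs.le)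
        · simpa using hshell_pos

end Separated

theorem schoenberg_columns_l2_general (n : ℕ) (f : ℝ → ℝ) (hpos : ∀ t, 0 ≤ t → 0 ≤ f t)
    (hmono : AntitoneOn f (Set.Ici (0 : ℝ))) (hf0 : f 0 = 1)
    (X : ℕ → EuclideanSpace ℝ (Fin n))
    (hsep : 0 < sInf {r : ℝ | ∃ i j : ℕ, i ≠ j ∧ r = dist (X i) (X j)})
    (d : ℕ) (hd : Module.finrank ℝ (Submodule.span ℝ (Set.range X)) = d)
    (hint : IntegrableOn (fun t : ℝ => t ^ (d - 1) * f t ^ 2) (Set.Ioi 0)) :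
    ∀ j : ℕ, ∑' k : ℕ, ENNReal.ofReal (f (dist (X k) (X j)) ^ 2) ≤
      ENNReal.ofReal (1 + (d : ℝ) ^ 2 *
        (5 / sInf {r : ℝ | ∃ i j : ℕ, i ≠ j ∧ r = dist (X i) (X j)}) ^ d *
        ∫ s in Set.Ioi (0 : ℝ), s ^ (d - 1) * f s ^ 2) := by
  intro j
  set δ := sInf {r : ℝ | ∃ i j : ℕ, i ≠ j ∧ r = dist (X i) (X j)}
  have hδ : ∀ i k, i ≠ k → δ ≤ dist (X i) (X k) := fun i k hik =>
    csInf_le ⟨0, by rintro _ ⟨_, _, _, rfl⟩; exact dist_nonneg⟩ ⟨i, k, hik, rfl⟩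
  let Y : ℕ → Submodule.span ℝ (Set.range X) := fun k => ⟨X k, Submodule.subset_span ⟨k, rfl⟩⟩
  have hg : AntitoneOn (fun t => f t ^ 2) (Ici 0) := fun a ha b hb hab =>
    pow_le_pow_left₀ (hpos b hb) (hmono ha hb hab) 2
  refine ENNReal.summable.tsum_le_of_sum_le fun F => ?_
  rw [← ENNReal.ofReal_sum_of_nonneg fun _ _ => sq_nonneg _]
  refine ENNReal.ofReal_le_ofReal ?_
  have hrest := sum_le_integral_of_separated Y (F.erase j) (Y j) hsep
    (fun i _ k _ hik => hδ i k hik) (fun i hi => hδ i j (ne_of_mem_erase hi))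
    (fun t _ => sq_nonneg (f t)) hg (hd ▸ hint)
  rw [hd] at hrest
  calc ∑ k ∈ F, f (dist (X k) (X j)) ^ 2
      ≤ ∑ k ∈ insert j (F.erase j), f (dist (X k) (X j)) ^ 2 :=
        sum_le_sum_of_subset_of_nonneg (insert_erase_subset _ _) fun _ _ _ => sq_nonneg _
    _ = 1 + ∑ k ∈ F.erase j, f (dist (X k) (X j)) ^ 2 := by
        rw [sum_insert (notMem_erase j F), dist_self, hf0, one_pow]
    _ ≤ _ := add_le_add_right hrest 1

/-- If `f` is nonnegative monotone decreasing with `f 0 = 1`, `∫_0^∞ t^{d-1} f(t)² dt < ∞`,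
and `X ⊂ ℝⁿ` is separated with linear span of dimension `d`, then the columns of the Schoenberg
matrix are uniformly in `ℓ²`:
`sup_j ∑_k f(|x_k - x_j|)² ≤ 1 + d² (5/d_*(X))^d ∫_0^∞ s^{d-1} f(s)² ds`. -/
theorem schoenberg_columns_l2 (n : ℕ) (f : ℝ → ℝ) (hpos : ∀ t, 0 ≤ t → 0 ≤ f t)
    (hmono : AntitoneOn f (Set.Ici (0 : ℝ))) (hf0 : f 0 = 1)
    (X : ℕ → EuclideanSpace ℝ (Fin n)) (hinj : Function.Injective X)
    (hsep : 0 < sInf {r : ℝ | ∃ i j : ℕ, i ≠ j ∧ r = dist (X i) (X j)})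
    (d : ℕ) (hd : Module.finrank ℝ (Submodule.span ℝ (Set.range X)) = d)
    (hint : IntegrableOn (fun t : ℝ => t ^ (d - 1) * f t ^ 2) (Set.Ioi 0)) :
    ∀ j : ℕ, ∑' k : ℕ, ENNReal.ofReal (f (dist (X k) (X j)) ^ 2) ≤
      ENNReal.ofReal (1 + (d : ℝ) ^ 2 *
        (5 / sInf {r : ℝ | ∃ i j : ℕ, i ≠ j ∧ r = dist (X i) (X j)}) ^ d *
        ∫ s in Set.Ioi (0 : ℝ), s ^ (d - 1) * f s ^ 2) :=
  schoenberg_columns_l2_general n f hpos hmono hf0 X hsep d hd hint
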